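/- Let k be a perfect field of characteristic 2, and let μ ∈ k* be such that the polynomial x² + μx + 1 has no root in k. Set F = x² + μxy + y² − 1 ∈ k[x,y]. Then a k-algebra automorphism φ of k[x,y] satisfies φ(F) = cF for some c ∈ k* if and only if φ is linear (φ(x) = αx + βy, φ(y) = γx + δy with αδ − βγ ≠ 0) and preserves the quadratic form, i.e. φ(x)² + μ·φ(x)·φ(y) + φ(y)² = x² + μxy + y²; equivalently, Aut(A², V(F)) is the subgroup of GL(2,k) preserving the form x² + μxy + y², namely the set of matrices (a, b; b, a + μb) with a² + μab + b² = 1 together with their compositions with σ = (1, μ; 0, 1). -/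

import Mathlib

/-!
Write `p = φ x` and `q = φ y`, so that `p² + μpq + q² = cF + 1` has total degree at most `2`.
Over an extension containing a root `θ` of `t² + μt + 1` the left side factors as
`(p - θq)(p - θ'q)`; as `θ, θ' ∉ k`, each factor has support `supp p ∪ supp q`, hence total degree
`max (deg p) (deg q)`. So `p = e + αx + βy` and `q = f + γx + δy` are affine. In characteristic `2`
the linear part of `p² + μpq + q²` is `μ(eγ + fα)x + μ(eδ + fβ)y`, and it must vanish; together
with the `xy`-coefficient `αδ + βγ = c ≠ 0` this forces `e = f = 0`, and then `c = 1`.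
-/

open MvPolynomial

theorem exists_root_notMem_range_algebraMap {k K : Type*} [Field k] [Field K] [Algebra k K]
    [IsAlgClosed K] {b c : k}
    (hroot : ∀ s : k, s ^ 2 + b * s + c ≠ 0) :
    ∃ θ : K, θ ^ 2 + algebraMap k K b * θ + algebraMap k K c = 0 ∧
      θ ∉ Set.range (algebraMap k K) := by
  obtain ⟨θ, hθ⟩ := IsAlgClosed.exists_root
    (Polynomial.X ^ 2 + Polynomial.C (algebraMap k K b) * Polynomial.X
      + Polynomial.C (algebraMap k K c)) (by
      rw [show (_ : Polynomial K).degree = 2 by compute_degree!]; decide)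
  simp only [Polynomial.IsRoot, Polynomial.eval_add, Polynomial.eval_pow, Polynomial.eval_mul,
    Polynomial.eval_C, Polynomial.eval_X] at hθ
  refine ⟨θ, hθ, ?_⟩
  rintro ⟨a, rfl⟩
  exact hroot a ((algebraMap k K).injective (by simpa using hθ))

namespace MvPolynomial

variable {σ k K : Type*} [Field k] [Field K] [Algebra k K]

theorem totalDegree_map_of_injective {R S : Type*} [CommSemiring R] [CommSemiring S]
    {f : R →+* S} (hf : Function.Injective f) (p : MvPolynomial σ R) :
    (map f p).totalDegree = p.totalDegree := by
  simp only [totalDegree, support_map_of_injective p hf]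

theorem support_map_sub_C_mul_map [DecidableEq σ] {θ : K} (hθ : θ ∉ Set.range (algebraMap k K))
    (p q : MvPolynomial σ k) :
    (map (algebraMap k K) p - C θ * map (algebraMap k K) q).support = p.support ∪ q.support := by
  ext m
  simp only [mem_support_iff, coeff_sub, coeff_C_mul, coeff_map, Finset.mem_union, ne_eq]
  rw [← not_and_or, not_iff_not, sub_eq_zero]
  constructor
  · intro h
    by_cases hq : coeff m q = 0
    · simp_all
    · exact absurd ⟨coeff m p / coeff m q, by simp [h, hq]⟩ hθ
  · rintro ⟨hp, hq⟩
    simp [hp, hq]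

theorem totalDegree_map_sub_C_mul_map {θ : K} (hθ : θ ∉ Set.range (algebraMap k K))
    (p q : MvPolynomial σ k) :
    (map (algebraMap k K) p - C θ * map (algebraMap k K) q).totalDegree
      = max p.totalDegree q.totalDegree := by
  classical
  simp only [totalDegree, support_map_sub_C_mul_map hθ, Finset.sup_union]

theorem totalDegree_sq_add_C_mul_add_C_mul_sq {b c : k} (hroot : ∀ s : k, s ^ 2 + b * s + c ≠ 0)
    (p q : MvPolynomial σ k) :
    (p ^ 2 + C b * p * q + C c * q ^ 2).totalDegree = 2 * max p.totalDegree q.totalDegree := by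
  obtain ⟨θ, hθ, hθk⟩ := exists_root_notMem_range_algebraMap (K := AlgebraicClosure k) hroot
  set ι := algebraMap k (AlgebraicClosure k)
  have hθ'k : -ι b - θ ∉ Set.range ι := by
    rintro ⟨a, ha⟩
    exact hθk ⟨-b - a, by simp [ι, ha]⟩
  have hfactor : map ι (p ^ 2 + C b * p * q + C c * q ^ 2)
      = (map ι p - C θ * map ι q) * (map ι p - C (-ι b - θ) * map ι q) := by
    have := congrArg (C : _ → MvPolynomial σ (AlgebraicClosure k)) hθ
    simp only [map_add, map_mul, map_pow, map_zero] at this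
    simp only [map_add, map_mul, map_pow, map_C, map_neg, map_sub]
    linear_combination (map ι q) ^ 2 * this
  by_cases hpq : p = 0 ∧ q = 0
  · simp [hpq.1, hpq.2]
  have hne : ∀ θ₀ ∉ Set.range ι, map ι p - C θ₀ * map ι q ≠ 0 := by
    classical
    intro θ₀ hθ₀ h
    have := support_map_sub_C_mul_map hθ₀ p q
    rw [h, support_zero, eq_comm, Finset.union_eq_empty, support_eq_empty, support_eq_empty] at this
    exact hpq this
  rw [← totalDegree_map_of_injective ι.injective, hfactor,
    totalDegree_mul_of_isDomain (hne θ hθk) (hne _ hθ'k), totalDegree_map_sub_C_mul_map hθk,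
    totalDegree_map_sub_C_mul_map hθ'k, two_mul]

theorem eq_C_add_sum_C_mul_X_of_totalDegree_le_one [Fintype σ] {R : Type*} [CommSemiring R]
    {p : MvPolynomial σ R} (hp : p.totalDegree ≤ 1) :
    p = C (coeff 0 p) + ∑ i, C (coeff (Finsupp.single i 1) p) * X i := by
  classical
  ext d
  simp only [coeff_add, coeff_C, coeff_sum, coeff_C_mul, coeff_X, mul_ite, mul_one, mul_zero]
  rcases Nat.lt_or_ge d.degree 2 with hd | hd
  · obtain hd0 | hd1 : d.degree = 0 ∨ d.degree = 1 := by omega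
    · obtain rfl := (Finsupp.degree_eq_zero_iff d).mp hd0
      simp
    · obtain ⟨i, rfl⟩ := (Finsupp.range_single_one (σ := σ)).symm.subset hd1
      simp [Finsupp.single_left_inj, eq_comm (a := (0 : σ →₀ ℕ))]
  · have hne : ∀ i : σ, Finsupp.single i 1 ≠ d := by
      rintro i rfl; simp at hd
    have hne0 : (0 : σ →₀ ℕ) ≠ d := by rintro rfl; simp at hd
    rw [coeff_eq_zero_of_totalDegree_lt (by rw [← Finsupp.degree_apply]; omega)]
    simp [hne, hne0]

theorem eq_zero_of_quadratic_eq_zero {R : Type*} [CommSemiring R] {a₀ a₁ a₂ a₃ a₄ a₅ : R}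
    (h : C a₀ + C a₁ * X 0 + C a₂ * X 1 + C a₃ * X 0 ^ 2 + C a₄ * (X 0 * X 1) + C a₅ * X 1 ^ 2
      = (0 : MvPolynomial (Fin 2) R)) :
    a₀ = 0 ∧ a₁ = 0 ∧ a₂ = 0 ∧ a₃ = 0 ∧ a₄ = 0 ∧ a₅ = 0 := by
  have hcoeff (m : Fin 2 →₀ ℕ) := congrArg (coeff m) h
  simp only [X, monomial_pow, monomial_mul, one_pow, one_mul, coeff_add, coeff_C, coeff_C_mul,
    coeff_monomial, coeff_zero] at hcoeff
  refine ⟨?_, ?_, ?_, ?_, ?_, ?_⟩ <;> [have := hcoeff 0; have := hcoeff (.single 0 1);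
    have := hcoeff (.single 1 1); have := hcoeff (.single 0 2);
    have := hcoeff (.single 0 1 + .single 1 1); have := hcoeff (.single 1 2)] <;>
    simpa [Finsupp.ext_iff, Fin.forall_fin_two, Finsupp.single_apply] using this

end MvPolynomial

theorem coeffs_of_affine_preserves_conic {k : Type*} [Field k] [CharP k 2]
    {μ c e α β f γ δ : k} (hμ : μ ≠ 0) (hc : c ≠ 0)
    (h : (C e + (C α * X 0 + C β * X 1) : MvPolynomial (Fin 2) k) ^ 2
        + C μ * (C e + (C α * X 0 + C β * X 1)) * (C f + (C γ * X 0 + C δ * X 1))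
        + (C f + (C γ * X 0 + C δ * X 1)) ^ 2
      = C c * (X 0 ^ 2 + C μ * X 0 * X 1 + X 1 ^ 2 - 1) + 1) :
    e = 0 ∧ f = 0 ∧ c = 1 ∧ α * δ - β * γ = 1 := by
  have h2 : (2 : k) = 0 := CharTwo.two_eq_zero
  obtain ⟨E0, E1, E2, -, E4, -⟩ := eq_zero_of_quadratic_eq_zero (R := k)
    (a₀ := e ^ 2 + μ * e * f + f ^ 2 - 1 + c)
    (a₁ := 2 * e * α + μ * (e * γ + f * α) + 2 * f * γ)
    (a₂ := 2 * e * β + μ * (e * δ + f * β) + 2 * f * δ)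
    (a₃ := α ^ 2 + μ * α * γ + γ ^ 2 - c)
    (a₄ := 2 * α * β + μ * (α * δ + β * γ) + 2 * γ * δ - c * μ)
    (a₅ := β ^ 2 + μ * β * δ + δ ^ 2 - c) (by
      simp only [map_add, map_mul, map_sub, map_pow, map_one, map_ofNat]
      linear_combination h)
  have hEγ : e * γ + f * α = 0 := by
    refine (mul_eq_zero.mp ?_).resolve_left hμ
    linear_combination E1 - (e * α + f * γ) * h2
  have hEδ : e * δ + f * β = 0 := by
    refine (mul_eq_zero.mp ?_).resolve_left hμ
    linear_combination E2 - (e * β + f * δ) * h2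
  have hdet : α * δ + β * γ = c := by
    have : μ * (α * δ + β * γ - c) = 0 := by linear_combination E4 - (α * β + γ * δ) * h2
    linear_combination (mul_eq_zero.mp this).resolve_left hμ
  have he : e = 0 := by
    refine (mul_eq_zero.mp ?_).resolve_right hc
    linear_combination -(e * hdet) + α * hEδ + β * hEγ - α * β * f * h2
  have hf : f = 0 := by
    refine (mul_eq_zero.mp ?_).resolve_right hc
    linear_combination -(f * hdet) + δ * hEγ + γ * hEδ - e * γ * δ * h2
  have hc1 : c = 1 := by linear_combination E0 - (e + μ * f) * he - f * hf
  exact ⟨he, hf, hc1, by linear_combination hdet + hc1 - β * γ * h2⟩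

theorem totalDegree_le_one_of_preserves_conic {k : Type*} [Field k] {μ c : k}
    (hroot : ∀ s : k, s ^ 2 + μ * s + 1 ≠ 0) {p q : MvPolynomial (Fin 2) k}
    (h : p ^ 2 + C μ * p * q + q ^ 2 = C c * (X 0 ^ 2 + C μ * X 0 * X 1 + X 1 ^ 2 - 1) + 1) :
    p.totalDegree ≤ 1 ∧ q.totalDegree ≤ 1 := by
  set Q : MvPolynomial (Fin 2) k := X 0 ^ 2 + C μ * X 0 * X 1 + X 1 ^ 2
  have hQ : Q.totalDegree = 2 := by
    simpa [totalDegree_X] using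
      totalDegree_sq_add_C_mul_add_C_mul_sq hroot (X 0 : MvPolynomial (Fin 2) k) (X 1)
  have hrhs : (C c * (Q - 1) + 1).totalDegree ≤ 2 :=
    calc _ = (C c * Q + C (1 - c)).totalDegree := by rw [C_sub, C_1]; ring_nf
      _ ≤ max ((C c).totalDegree + Q.totalDegree) (C (1 - c)).totalDegree :=
          (totalDegree_add _ _).trans (max_le_max (totalDegree_mul _ _) le_rfl)
      _ = 2 := by rw [totalDegree_C, totalDegree_C, hQ]; rfl
  have hN := totalDegree_sq_add_C_mul_add_C_mul_sq hroot p q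
  rw [C_1, one_mul, h] at hN
  omega

/-- The last conjunct of `aut_of_anisotropic_conic_char_two` lives in `MvPolynomial ℕ k`:
nothing in it fixes the type of the variables. -/
theorem linear_subst_conic_form_fin_two_iff {k : Type*} [CommRing k] {μ α β γ δ : k} :
    ((C α * X 0 + C β * X 1) ^ 2 + C μ * (C α * X 0 + C β * X 1) * (C γ * X 0 + C δ * X 1)
        + (C γ * X 0 + C δ * X 1) ^ 2
        = (X 0 ^ 2 + C μ * X 0 * X 1 + X 1 ^ 2 : MvPolynomial ℕ k)) ↔
      (C α * X 0 + C β * X 1) ^ 2 + C μ * (C α * X 0 + C β * X 1) * (C γ * X 0 + C δ * X 1)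
        + (C γ * X 0 + C δ * X 1) ^ 2
        = (X 0 ^ 2 + C μ * X 0 * X 1 + X 1 ^ 2 : MvPolynomial (Fin 2) k) := by
  rw [← (rename_injective _ Fin.val_injective).eq_iff]
  simp [rename_X]

theorem aut_of_anisotropic_conic_char_two_general {k : Type*} [Field k]
    [CharP k 2] (mu : kˣ) (hroot : ∀ s : k, s ^ 2 + (mu : k) * s + 1 ≠ 0)
    (φ : MvPolynomial (Fin 2) k ≃ₐ[k] MvPolynomial (Fin 2) k) :
    (∃ c : kˣ, φ (X 0 ^ 2 + C (mu : k) * X 0 * X 1 + X 1 ^ 2 - 1)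
        = C (c : k) * (X 0 ^ 2 + C (mu : k) * X 0 * X 1 + X 1 ^ 2 - 1)) ↔
      ∃ α β γ δ : k, α * δ - β * γ ≠ 0 ∧
        φ (X 0) = C α * X 0 + C β * X 1 ∧
        φ (X 1) = C γ * X 0 + C δ * X 1 ∧
        (C α * X 0 + C β * X 1) ^ 2
            + C (mu : k) * (C α * X 0 + C β * X 1) * (C γ * X 0 + C δ * X 1)
            + (C γ * X 0 + C δ * X 1) ^ 2
          = X 0 ^ 2 + C (mu : k) * X 0 * X 1 + X 1 ^ 2 := by
  have hC (a : k) : φ (C a) = C a := φ.commutes a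
  simp only [linear_subst_conic_form_fin_two_iff, map_sub, map_add, map_mul, map_pow, map_one, hC]
  constructor
  · rintro ⟨c, h⟩
    have hpq : φ (X 0) ^ 2 + C (mu : k) * φ (X 0) * φ (X 1) + φ (X 1) ^ 2
        = C (c : k) * (X 0 ^ 2 + C (mu : k) * X 0 * X 1 + X 1 ^ 2 - 1) + 1 := by
      linear_combination h
    obtain ⟨hp, hq⟩ := totalDegree_le_one_of_preserves_conic hroot hpq
    have hp' := eq_C_add_sum_C_mul_X_of_totalDegree_le_one hp
    have hq' := eq_C_add_sum_C_mul_X_of_totalDegree_le_one hq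
    rw [Fin.sum_univ_two] at hp' hq'
    rw [hp', hq'] at hpq
    obtain ⟨he, hf, hc1, hdet⟩ := coeffs_of_affine_preserves_conic mu.ne_zero c.ne_zero hpq
    rw [he, C_0, zero_add] at hp' hpq
    rw [hf, C_0, zero_add] at hq' hpq
    rw [hc1, C_1, one_mul] at hpq
    exact ⟨_, _, _, _, by simp [hdet], hp', hq', by linear_combination hpq⟩
  · rintro ⟨α, β, γ, δ, -, h0, h1, hform⟩
    exact ⟨1, by rw [h0, h1, hform, Units.val_one, C_1, one_mul]⟩

/-- over a perfect field of characteristic 2, the automorphisms of `𝔸²`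
preserving the conic `x² + μxy + y² = 1` (with `x² + μx + 1` having no root in `k`) are
exactly the linear automorphisms preserving the quadratic form `x² + μxy + y²`. -/
theorem aut_of_anisotropic_conic_char_two {k : Type*} [Field k] [PerfectField k]
    [CharP k 2] (mu : kˣ) (hroot : ∀ s : k, s ^ 2 + (mu : k) * s + 1 ≠ 0)
    (φ : MvPolynomial (Fin 2) k ≃ₐ[k] MvPolynomial (Fin 2) k) :
    (∃ c : kˣ, φ (X 0 ^ 2 + C (mu : k) * X 0 * X 1 + X 1 ^ 2 - 1)
        = C (c : k) * (X 0 ^ 2 + C (mu : k) * X 0 * X 1 + X 1 ^ 2 - 1)) ↔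
      ∃ α β γ δ : k, α * δ - β * γ ≠ 0 ∧
        φ (X 0) = C α * X 0 + C β * X 1 ∧
        φ (X 1) = C γ * X 0 + C δ * X 1 ∧
        (C α * X 0 + C β * X 1) ^ 2
            + C (mu : k) * (C α * X 0 + C β * X 1) * (C γ * X 0 + C δ * X 1)
            + (C γ * X 0 + C δ * X 1) ^ 2
          = X 0 ^ 2 + C (mu : k) * X 0 * X 1 + X 1 ^ 2 :=
  aut_of_anisotropic_conic_char_two_general mu hroot φ
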